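/- Let S_j be local potentials satisfying conditions A–E, let ω ∈ ℝ∖ℚ, let (p,q) ∈ ℕ×ℤ satisfy q/p < ω < (q+1)/p, and let y^min be a (p,q)-periodic Birkhoff minimizer. Then for every ε > 0 and every integer k ≥ 2 there exist local potentials S_j^{ε,1} satisfying conditions A–E with ||S_j^{ε,1} − S_j||_{C^k} ≤ ε/3, and a real number ξ, such that: whenever M ∈ ℕ, M ≥ 1, and x ∈ X_{Mp,Mq} satisfies ξ ≤ x_{k_i} + l_i ≤ ξ + 1/(2p) for integers 0 ≤ k_1 < k_2 < … < k_N < Mp and l_1,…,l_N ∈ ℤ, then W^{ε,1}_{Mp}(x) − W^{ε,1}_{Mp}(y^min) ≥ N·ε/(3·C_k·p^k), where W^{ε,1}_{Mp}(x) := Σ_{j=1}^{Mp} S_j^{ε,1}(x) and C_k > 0 is a constant depending only on k. -/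

import Mathlib

open Filter Topology

/-- The shift map `τ_{k,l}`: `(τ_{k,l} x) i = x (i - k) + l`. -/
def tau (k l : ℤ) (x : ℤ → ℝ) : ℤ → ℝ := fun i => x (i - k) + (l : ℝ)

/-- A sequence is Birkhoff (well-ordered) if its integer translates are totally ordered
in the pointwise partial order. -/
def Birkhoff (x : ℤ → ℝ) : Prop :=
  ∀ k l k' l' : ℤ, tau k l x ≤ tau k' l' x ∨ tau k' l' x ≤ tau k l x

/-- `x` has rotation number `ω` if `x n / n → ω` as `n → ±∞`. -/
def HasRotNum (x : ℤ → ℝ) (ω : ℝ) : Prop :=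
  Tendsto (fun n : ℤ => x n / (n : ℝ)) atTop (𝓝 ω) ∧
  Tendsto (fun n : ℤ => x n / (n : ℝ)) atBot (𝓝 ω)

/-- A Birkhoff sequence of rotation number `ω` is maximally periodic if `τ_{k,l} x = x`
whenever `-ω k + l = 0`. -/
def MaxPeriodic (ω : ℝ) (x : ℤ → ℝ) : Prop :=
  ∀ k l : ℤ, -ω * (k : ℝ) + (l : ℝ) = 0 → tau k l x = x

/-- Partial derivative of a function on sequence space with respect to coordinate `i`. -/
noncomputable def pd (F : (ℤ → ℝ) → ℝ) (i : ℤ) : (ℤ → ℝ) → ℝ :=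
  fun x => deriv (fun t => F (Function.update x i t)) (x i)

/-- Iterated partial derivatives along a list of coordinates. -/
noncomputable def pdList (F : (ℤ → ℝ) → ℝ) : List ℤ → (ℤ → ℝ) → ℝ
  | [] => F
  | i :: L => pd (pdList F L) i

/-- `F` and `G` are `ε`-close in the `C^k` norm: all iterated partial derivatives of order
`≤ k` of the difference are bounded by `ε`. -/
def CkClose (k : ℕ) (ε : ℝ) (F G : (ℤ → ℝ) → ℝ) : Prop :=
  ∀ L : List ℤ, L.length ≤ k → ∀ x : ℤ → ℝ, |pdList (fun y => F y - G y) L x| ≤ ε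

/-- Conditions A-E on a family of local potentials `S j : ℝ^ℤ → ℝ`, with range `r` and
uniform derivative bound `C`. -/
structure SatisfiesAE (r : ℕ) (C : ℝ) (S : ℤ → (ℤ → ℝ) → ℝ) : Prop where
  r_pos : 1 ≤ r
  C_pos : 0 < C
  /- A: finite range -/
  finRange : ∀ j : ℤ, ∀ x y : ℤ → ℝ, (∀ i : ℤ, |i - j| ≤ (r : ℤ) → x i = y i) → S j x = S j y
  /- A: C² smoothness -/
  contS : ∀ j : ℤ, Continuous (S j)
  diff1 : ∀ j i : ℤ, ∀ x : ℤ → ℝ, DifferentiableAt ℝ (fun t => S j (Function.update x i t)) (x i)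
  diff2 : ∀ j i k : ℤ, ∀ x : ℤ → ℝ,
    DifferentiableAt ℝ (fun t => pd (S j) i (Function.update x k t)) (x k)
  cont1 : ∀ j i : ℤ, Continuous (pd (S j) i)
  cont2 : ∀ j i k : ℤ, Continuous (pd (pd (S j) i) k)
  /- B: shift invariance -/
  shiftInv : ∀ j k l : ℤ, ∀ x : ℤ → ℝ, S j x = S (j + k) (tau k l x)
  /- C: coercivity -/
  coercive : ∀ j k : ℤ, |k - j| = 1 → ∀ M : ℝ, ∃ R : ℝ, ∀ x : ℤ → ℝ, R ≤ |x k - x j| → M ≤ S j x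
  /- D: monotonicity -/
  mono : ∀ j i k : ℤ, i ≠ k → ∀ x : ℤ → ℝ, pd (pd (S j) i) k x ≤ 0
  monoStrict : ∀ j k : ℤ, |j - k| = 1 → ∀ x : ℤ → ℝ, pd (pd (S j) j) k x < 0
  /- E: bounded derivatives -/
  bdd1 : ∀ j i : ℤ, ∀ x : ℤ → ℝ, |pd (S j) i x| ≤ C
  bdd2 : ∀ j i k : ℤ, ∀ x : ℤ → ℝ, |pd (pd (S j) i) k x| ≤ C

/-- The periodic action `W_p(x) = ∑_{j=1}^p S_j(x)`. -/
noncomputable def Wper (S : ℤ → (ℤ → ℝ) → ℝ) (p : ℕ) (x : ℤ → ℝ) : ℝ :=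
  ∑ j ∈ Finset.Icc (1 : ℤ) (p : ℤ), S j x

/-- A `(p,q)`-periodic minimizer: `τ_{p,q} x = x` and `x` minimizes `W_p` over `X_{p,q}`. -/
def PerMin (S : ℤ → (ℤ → ℝ) → ℝ) (p : ℕ) (q : ℤ) (x : ℤ → ℝ) : Prop :=
  tau (p : ℤ) q x = x ∧ ∀ y : ℤ → ℝ, tau (p : ℤ) q y = y → Wper S p x ≤ Wper S p y

/-- The (formally convergent, by finite range) energy difference `W(x+y) - W(x)`. -/
noncomputable def Wdiff (S : ℤ → (ℤ → ℝ) → ℝ) (x y : ℤ → ℝ) : ℝ :=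
  ∑' j : ℤ, (S j (fun i => x i + y i) - S j x)

/-- `x` is a global minimizer: every finite-support variation does not decrease the energy. -/
def GlobalMin (S : ℤ → (ℤ → ℝ) → ℝ) (x : ℤ → ℝ) : Prop :=
  ∀ y : ℤ → ℝ, (Function.support y).Finite → 0 ≤ Wdiff S x y

/-- The extended orbit `Σ_y = { y k + l : k, l ∈ ℤ }`. -/
def extOrbit (y : ℤ → ℝ) : Set ℝ := {ξ : ℝ | ∃ k l : ℤ, ξ = y k + (l : ℝ)}

/-!
The perturbation is an on-site term `g (x j)`, where `g` is a smooth `1`-periodic bump of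
`C^k`-size `ε / 3`. Since `y^min` is `(p,q)`-periodic, its values meet at most `p` points of
`ℝ/ℤ`, so by pigeonhole there is a centre `c` at distance `≥ 3/(8p)` from all of them; `g`
vanishes there and equals `δ = ε / (3B)` on `[c - 1/(4p), c + 1/(4p)]`, where `B` bounds the
first `k` derivatives of the unscaled bump. The action of `y^min` is unchanged and each visit of
`x` to the window adds `δ`, so it remains to see `W_{Mp}(y^min) ≤ W_{Mp}(x)`. Condition (D) makes
the `S_j` submodular; sorting the translates `τ_{mp,mq} x`, `m < M`, by `⊓`/`⊔` therefore does not
increase their total action, and the sorted configurations are `(p,q)`-periodic because `τ_{p,q}`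
only permutes the translates. Hence each has action at least that of `y^min`.
-/

open Function

structure MixedPartialsNonpos (F : (ℤ → ℝ) → ℝ) : Prop where
  diff1 : ∀ i x, DifferentiableAt ℝ (fun t => F (update x i t)) (x i)
  diff2 : ∀ i k x, DifferentiableAt ℝ (fun t => pd F i (update x k t)) (x k)
  mono : ∀ i k, i ≠ k → ∀ x, pd (pd F i) k x ≤ 0

lemma pd_update_self (F : (ℤ → ℝ) → ℝ) (i : ℤ) (x : ℤ → ℝ) (t : ℝ) :
    pd F i (update x i t) = deriv (fun s => F (update x i s)) t := by
  simp only [pd, update_idem, update_self]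

lemma differentiableAt_update {F : (ℤ → ℝ) → ℝ}
    (hF : ∀ i x, DifferentiableAt ℝ (fun t => F (update x i t)) (x i)) (i : ℤ) (x : ℤ → ℝ)
    (t : ℝ) : DifferentiableAt ℝ (fun s => F (update x i s)) t := by
  simpa only [update_idem, update_self] using hF i (update x i t)

namespace MixedPartialsNonpos

variable {F : (ℤ → ℝ) → ℝ}

lemma antitone_pd_update (hF : MixedPartialsNonpos F) {i m : ℤ} (him : i ≠ m) (x : ℤ → ℝ) :
    Antitone (fun t => pd F i (update x m t)) := by
  refine antitone_of_deriv_nonpos (differentiableAt_update (hF.diff2 i) m x) fun t => ?_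
  rw [← pd_update_self]
  exact hF.mono i m him _

lemma pd_le_pd_of_le (hF : MixedPartialsNonpos F) (D : Finset ℤ) {i : ℤ} (hi : i ∉ D) {x y : ℤ → ℝ}
    (hxy : ∀ m ∉ D, x m = y m) (hle : x ≤ y) : pd F i y ≤ pd F i x := by
  induction D using Finset.induction_on generalizing y with
  | empty => rw [funext fun m => hxy m (Finset.notMem_empty m)]
  | @insert m D hm ih =>
    have him : i ≠ m := fun h => hi (h ▸ Finset.mem_insert_self m D)
    calc pd F i y ≤ pd F i (update y m (x m)) := by
          simpa using hF.antitone_pd_update him y (hle m)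
      _ ≤ pd F i x := by
          refine ih (fun h => hi (Finset.mem_insert_of_mem h)) (fun n hn => ?_) (fun n => ?_)
          · rcases eq_or_ne n m with rfl | hnm
            · simp
            · rw [update_of_ne hnm]; exact hxy n (by simp [hnm, hn])
          · rcases eq_or_ne n m with rfl | hnm
            · simp
            · rw [update_of_ne hnm]; exact hle n

lemma sub_update_le_sub_update (hF : MixedPartialsNonpos F) (D : Finset ℤ) {i : ℤ} (hi : i ∉ D)
    {x y : ℤ → ℝ} (hxy : ∀ m ∉ D, x m = y m) (hle : x ≤ y) {a b : ℝ} (hab : a ≤ b) :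
    F (update y i b) - F (update y i a) ≤ F (update x i b) - F (update x i a) := by
  have hdiff : ∀ z : ℤ → ℝ, Differentiable ℝ fun t => F (update z i t) :=
    fun z => differentiableAt_update hF.diff1 i z
  have hmono : Monotone fun t => F (update x i t) - F (update y i t) := by
    refine monotone_of_deriv_nonneg ((hdiff x).sub (hdiff y)) fun t => ?_
    rw [deriv_fun_sub (hdiff x t) (hdiff y t), ← pd_update_self, ← pd_update_self, sub_nonneg]
    refine hF.pd_le_pd_of_le D hi (fun m hm => ?_) (fun n => ?_)
    · rcases eq_or_ne m i with rfl | hmi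
      · simp
      · simp only [update_of_ne hmi]; exact hxy m hm
    · rcases eq_or_ne n i with rfl | hni
      · simp
      · simp only [update_of_ne hni]; exact hle n
  linarith [hmono hab]

lemma inf_add_sup_le_of_eqOn_compl (hF : MixedPartialsNonpos F) (D : Finset ℤ) {x y : ℤ → ℝ}
    (hxy : ∀ m ∉ D, x m = y m) :
    F (x ⊓ y) + F (x ⊔ y) ≤ F x + F y := by
  induction D using Finset.induction_on generalizing x y with
  | empty => rw [funext fun m => hxy m (Finset.notMem_empty m)]; simp
  | @insert m D hm ih =>
    wlog h : x m ≤ y m generalizing x y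
    · have := this (fun n hn => (hxy n hn).symm) (le_of_not_ge h)
      rw [inf_comm, sup_comm] at this
      linarith
    -- raising `x m` to `y m` shrinks the set where the configurations differ
    set x' := update x m (y m)
    have hsup : x' ⊔ y = x ⊔ y := by
      ext n
      rcases eq_or_ne n m with rfl | hnm
      · simp [x', h]
      · simp [x', update_of_ne hnm]
    have hinf : x' ⊓ y = update (x ⊓ y) m (y m) := by
      ext n
      rcases eq_or_ne n m with rfl | hnm
      · simp [x']
      · simp [x', update_of_ne hnm]
    have hIH := ih (x := x') (y := y) fun n hn => by
      rcases eq_or_ne n m with rfl | hnm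
      · simp [x']
      · simp only [x', update_of_ne hnm]; exact hxy n (by simp [hnm, hn])
    have hinc := hF.sub_update_le_sub_update D hm (x := x ⊓ y) (y := x)
      (fun n hn => by
        rcases eq_or_ne n m with rfl | hnm
        · simp [h]
        · simp [hxy n (by simp [hnm, hn])])
      inf_le_left h
    have hxy_m : update (x ⊓ y) m (x m) = x ⊓ y := by
      rw [← update_eq_self m (x ⊓ y)]; simp [h]
    rw [update_eq_self, ← hinf, hxy_m] at hinc
    rw [hsup] at hIH
    linarith

end MixedPartialsNonpos

namespace SatisfiesAE

variable {r : ℕ} {C : ℝ} {S : ℤ → (ℤ → ℝ) → ℝ}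

theorem inf_add_sup_le (hS : SatisfiesAE r C S) (j : ℤ) (a b : ℤ → ℝ) :
    S j (a ⊓ b) + S j (a ⊔ b) ≤ S j a + S j b := by
  classical
  -- by finite range, `b` may be replaced by a configuration that differs from `a` on a finite set
  set D := Finset.Icc (j - r) (j + r)
  have hmem : ∀ {n : ℤ}, |n - j| ≤ r → n ∈ D := fun h => by
    rw [Finset.mem_Icc]; constructor <;> linarith [(abs_le.mp h).1, (abs_le.mp h).2]
  set b' : ℤ → ℝ := fun n => if n ∈ D then b n else a n
  have hb : S j b' = S j b := hS.finRange j _ _ fun i hi => by simp [b', hmem hi]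
  have hinf : S j (a ⊓ b') = S j (a ⊓ b) := hS.finRange j _ _ fun i hi => by simp [b', hmem hi]
  have hsup : S j (a ⊔ b') = S j (a ⊔ b) := hS.finRange j _ _ fun i hi => by simp [b', hmem hi]
  have hF : MixedPartialsNonpos (S j) := ⟨hS.diff1 j, hS.diff2 j, hS.mono j⟩
  have := hF.inf_add_sup_le_of_eqOn_compl D (x := a) (y := b') fun m hm => by simp [b', hm]
  rwa [hb, hinf, hsup] at this

end SatisfiesAE

section LatticeSort

variable {α β : Type*} [Lattice α] [Lattice β]

def insertSup (t : α) (v : ℕ → α) : ℕ → α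
  | 0 => t
  | s + 1 => v s ⊔ insertSup t v s

def insertInf (t : α) (v : ℕ → α) (s : ℕ) : α := v s ⊓ insertSup t v s

/-- Insertion sort of `z 0, …, z (M-1)` by lattice operations: `z M` is inserted into the sorted
`latticeSort M z` as `insertInf _ _ 0, …, insertInf _ _ (M-1), insertSup _ _ M`. -/
def latticeSort : ℕ → (ℕ → α) → ℕ → α
  | 0, z => z
  | M + 1, z => fun s =>
      if s < M then insertInf (z M) (latticeSort M z) s
      else if s = M then insertSup (z M) (latticeSort M z) M else z s

lemma latticeSort_of_le {M s : ℕ} (z : ℕ → α) (h : M ≤ s) : latticeSort M z s = z s := by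
  cases M with
  | zero => rfl
  | succ M => simp [latticeSort, show ¬ s < M by omega, show s ≠ M by omega]

lemma latticeSort_succ_of_lt {M s : ℕ} (z : ℕ → α) (h : s < M) :
    latticeSort (M + 1) z s = insertInf (z M) (latticeSort M z) s := by
  simp [latticeSort, h]

lemma latticeSort_succ_self (M : ℕ) (z : ℕ → α) :
    latticeSort (M + 1) z M = insertSup (z M) (latticeSort M z) M := by
  simp [latticeSort]

lemma map_insertSup (f : LatticeHom α β) (t : α) (v : ℕ → α) (s : ℕ) :
    f (insertSup t v s) = insertSup (f t) (f ∘ v) s := by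
  induction s with
  | zero => rfl
  | succ s ih => rw [insertSup, insertSup, SupHomClass.map_sup, ih]; rfl

lemma map_latticeSort (f : LatticeHom α β) (M : ℕ) (z : ℕ → α) (s : ℕ) :
    f (latticeSort M z s) = latticeSort M (f ∘ z) s := by
  induction M generalizing s with
  | zero => rfl
  | succ M ih =>
    have hsort : latticeSort M (f ∘ z) = f ∘ latticeSort M z := funext fun s => (ih s).symm
    rcases lt_trichotomy s M with h | rfl | h
    · simp [latticeSort_succ_of_lt _ h, insertInf, map_insertSup, hsort]
    · simp [latticeSort_succ_self, map_insertSup, hsort]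
    · rw [latticeSort_of_le _ h, latticeSort_of_le _ h]; rfl

lemma latticeSort_le_succ {M s : ℕ} (z : ℕ → α) (h : s + 1 < M) :
    latticeSort M z s ≤ latticeSort M z (s + 1) := by
  induction M with
  | zero => omega
  | succ M ih =>
    rw [latticeSort_succ_of_lt z (by omega)]
    rcases lt_or_eq_of_le (Nat.le_of_lt_succ h) with h' | h'
    · rw [latticeSort_succ_of_lt z h']
      exact inf_le_inf (ih h') le_sup_right
    · subst h'
      rw [latticeSort_succ_self]
      exact inf_le_left.trans le_sup_left

lemma latticeSort_mono {M s t : ℕ} (z : ℕ → α) (hst : s ≤ t) (ht : t < M) :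
    latticeSort M z s ≤ latticeSort M z t := by
  induction t, hst using Nat.le_induction with
  | base => rfl
  | succ t hst ih => exact (ih (by omega)).trans (latticeSort_le_succ z ht)

lemma sum_insertInf_add_insertSup_le {W : α → ℝ} (hW : ∀ a b, W (a ⊓ b) + W (a ⊔ b) ≤ W a + W b)
    (M : ℕ) (t : α) (v : ℕ → α) :
    ∑ s ∈ Finset.range M, W (insertInf t v s) + W (insertSup t v M) ≤
      ∑ s ∈ Finset.range M, W (v s) + W t := by
  induction M with
  | zero => simp [insertSup]
  | succ M ih =>
    rw [Finset.sum_range_succ, Finset.sum_range_succ]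
    have : W (insertInf t v M) + W (insertSup t v (M + 1)) ≤ W (v M) + W (insertSup t v M) :=
      hW _ _
    linarith

theorem sum_latticeSort_le {W : α → ℝ} (hW : ∀ a b, W (a ⊓ b) + W (a ⊔ b) ≤ W a + W b)
    (M : ℕ) (z : ℕ → α) :
    ∑ s ∈ Finset.range M, W (latticeSort M z s) ≤ ∑ m ∈ Finset.range M, W (z m) := by
  induction M with
  | zero => simp
  | succ M ih =>
    rw [Finset.sum_range_succ, Finset.sum_range_succ,
      Finset.sum_congr rfl fun s hs => by rw [latticeSort_succ_of_lt z (Finset.mem_range.mp hs)],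
      latticeSort_succ_self]
    linarith [sum_insertInf_add_insertSup_le hW M (z M) (latticeSort M z)]

end LatticeSort

section LinearOrder

variable {β : Type*} [LinearOrder β]

lemma insertSup_cons_map_insertInf (M : ℕ) (t : β) (v : ℕ → β) :
    insertSup t v M ::ₘ (Multiset.range M).map (insertInf t v) =
      t ::ₘ (Multiset.range M).map v := by
  induction M with
  | zero => rfl
  | succ M ih =>
    rw [Multiset.range_succ, Multiset.map_cons, Multiset.map_cons, Multiset.cons_swap t, ← ih]
    rcases le_total (v M) (insertSup t v M) with h | h
    · rw [insertSup, insertInf, sup_eq_right.mpr h, inf_eq_left.mpr h, Multiset.cons_swap]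
    · rw [insertSup, insertInf, sup_eq_left.mpr h, inf_eq_right.mpr h]

lemma map_range_latticeSort (M : ℕ) (z : ℕ → β) :
    (Multiset.range M).map (latticeSort M z) = (Multiset.range M).map z := by
  induction M with
  | zero => rfl
  | succ M ih =>
    rw [Multiset.range_succ, Multiset.map_cons, Multiset.map_cons, latticeSort_succ_self,
      Multiset.map_congr rfl fun s hs => latticeSort_succ_of_lt z (Multiset.mem_range.mp hs),
      insertSup_cons_map_insertInf, ih]

lemma eq_of_map_range_eq_of_monotoneOn {M s : ℕ} {w w' : ℕ → β}
    (hw : MonotoneOn w (Set.Iio M)) (hw' : MonotoneOn w' (Set.Iio M))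
    (h : (Multiset.range M).map w = (Multiset.range M).map w') (hs : s < M) : w s = w' s := by
  have hsorted : ∀ u : ℕ → β, MonotoneOn u (Set.Iio M) →
      ((List.range M).map u).Pairwise (· ≤ ·) := fun u hu =>
    List.pairwise_map.mpr <| List.pairwise_lt_range.imp_of_mem fun ha hb hab =>
      hu (List.mem_range.mp ha) (List.mem_range.mp hb) hab.le
  have hlist := List.Perm.eq_of_pairwise' (hsorted w hw) (hsorted w' hw') (Multiset.coe_eq_coe.mp h)
  simpa [hs] using congrArg (·[s]?) hlist

lemma latticeSort_eq_of_map_range_eq {M s : ℕ} {z z' : ℕ → β}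
    (h : (Multiset.range M).map z = (Multiset.range M).map z') (hs : s < M) :
    latticeSort M z s = latticeSort M z' s := by
  have hmono : ∀ u : ℕ → β, MonotoneOn (latticeSort M u) (Set.Iio M) :=
    fun u _ _ _ hb hab => latticeSort_mono u hab hb
  refine eq_of_map_range_eq_of_monotoneOn (hmono z) (hmono z') ?_ hs
  rw [map_range_latticeSort, map_range_latticeSort, h]

end LinearOrder

lemma latticeSort_pi_eq_of_map_range_eq {ι β : Type*} [LinearOrder β] {M s : ℕ}
    {z z' : ℕ → ι → β} (h : (Multiset.range M).map z = (Multiset.range M).map z') (hs : s < M) :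
    latticeSort M z s = latticeSort M z' s := by
  funext i
  have hi := congrArg (Multiset.map (Function.eval i)) h
  simp only [Multiset.map_map] at hi
  have hz := map_latticeSort (Pi.evalLatticeHom (α := fun _ : ι => β) i) M z s
  have hz' := map_latticeSort (Pi.evalLatticeHom (α := fun _ : ι => β) i) M z' s
  exact hz.trans ((latticeSort_eq_of_map_range_eq hi hs).trans hz'.symm)

lemma Multiset.map_range_succ_eq_of_eq {α : Type*} {M : ℕ} {z : ℕ → α} (hz : z M = z 0) :
    (Multiset.range M).map (fun m => z (m + 1)) = (Multiset.range M).map z := by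
  have h : (Multiset.range (M + 1)).map z =
      z 0 ::ₘ (Multiset.range M).map (fun m => z (m + 1)) := by
    simp [Multiset.range, List.range_succ_eq_map, Function.comp_def]
  rw [Multiset.range_succ, Multiset.map_cons, hz] at h
  exact ((Multiset.cons_inj_right _).mp h).symm

lemma Function.Periodic.sum_range_add {M : Type*} [AddCancelCommMonoid M] {f : ℤ → M} {n : ℕ}
    (hf : Periodic f n) (a : ℤ) : ∑ i ∈ Finset.range n, f (a + i) = ∑ i ∈ Finset.range n, f i := by
  have hstep : Periodic (fun a : ℤ => ∑ i ∈ Finset.range n, f (a + i)) 1 := fun a => by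
    have h := Finset.sum_range_succ' (fun i : ℕ => f (a + i)) n
    rw [Finset.sum_range_succ, Nat.cast_zero, add_zero, hf a, add_left_inj] at h
    dsimp only
    rw [h]
    exact Finset.sum_congr rfl fun i _ => by push_cast; ring_nf
  simpa using hstep.int_mul_eq a

lemma Function.Periodic.sum_range_mul {M : Type*} [AddCancelCommMonoid M] {f : ℤ → M} {n : ℕ}
    (hf : Periodic f n) (a : ℤ) (m : ℕ) :
    ∑ i ∈ Finset.range (m * n), f (a + i) = m • ∑ i ∈ Finset.range n, f i := by
  induction m with
  | zero => simp
  | succ m ih =>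
    rw [add_mul, one_mul, Finset.sum_range_add, ih, succ_nsmul]
    congr 1
    simpa [add_assoc] using hf.sum_range_add (a + (m * n : ℕ))

lemma tau_tau (k l k' l' : ℤ) (x : ℤ → ℝ) : tau k l (tau k' l' x) = tau (k + k') (l + l') x := by
  ext i
  simp only [tau, Int.cast_add]
  ring_nf

lemma tau_zero_zero (x : ℤ → ℝ) : tau 0 0 x = x := by
  ext i
  simp [tau]

def tauLatticeHom (k l : ℤ) : LatticeHom (ℤ → ℝ) (ℤ → ℝ) where
  toFun := tau k l
  map_sup' a b := by ext i; simp [tau, max_add_add_right]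
  map_inf' a b := by ext i; simp [tau, min_add_add_right]

lemma sum_Icc_one_eq_sum_range {M : Type*} [AddCommMonoid M] (f : ℤ → M) (n : ℕ) :
    ∑ j ∈ Finset.Icc 1 (n : ℤ), f j = ∑ i ∈ Finset.range n, f (1 + i) := by
  rw [Int.Icc_eq_finset_map, Finset.sum_map]
  simp

lemma Wper_eq_sum_range (S : ℤ → (ℤ → ℝ) → ℝ) (n : ℕ) (x : ℤ → ℝ) :
    Wper S n x = ∑ i ∈ Finset.range n, S (1 + i) x :=
  sum_Icc_one_eq_sum_range _ n

section PeriodicAction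

variable {S : ℤ → (ℤ → ℝ) → ℝ}

lemma periodic_of_tau_eq (hshift : ∀ j k l x, S j x = S (j + k) (tau k l x)) {n l : ℤ}
    {x : ℤ → ℝ} (hx : tau n l x = x) :
    Function.Periodic (fun j => S j x) n := fun j => by
  simp only
  conv_rhs => rw [hshift j n l x, hx]

lemma Wper_tau_of_tau_eq (hshift : ∀ j k l x, S j x = S (j + k) (tau k l x)) {n : ℕ} {l : ℤ}
    {x : ℤ → ℝ} (hx : tau n l x = x) (k l' : ℤ) :
    Wper S n (tau k l' x) = Wper S n x := by
  have hper := periodic_of_tau_eq hshift hx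
  have hterm : ∀ i : ℕ, S (1 + i) (tau k l' x) = S (1 - k + i) x := fun i => by
    rw [hshift (1 - k + i) k l' x]
    ring_nf
  simp only [Wper_eq_sum_range, hterm]
  rw [hper.sum_range_add, hper.sum_range_add]

lemma Wper_mul_of_tau_eq (hshift : ∀ j k l x, S j x = S (j + k) (tau k l x))
    {p : ℕ} {q : ℤ} {y : ℤ → ℝ} (hy : tau p q y = y) (M : ℕ) :
    Wper S (M * p) y = M * Wper S p y := by
  have hper := periodic_of_tau_eq hshift hy
  rw [Wper_eq_sum_range, Wper_eq_sum_range, hper.sum_range_mul, hper.sum_range_add, nsmul_eq_mul]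

end PeriodicAction

lemma Wper_inf_add_sup_le {S : ℤ → (ℤ → ℝ) → ℝ}
    (hsub : ∀ j a b, S j (a ⊓ b) + S j (a ⊔ b) ≤ S j a + S j b) (n : ℕ) (a b : ℤ → ℝ) :
    Wper S n (a ⊓ b) + Wper S n (a ⊔ b) ≤ Wper S n a + Wper S n b := by
  simp only [Wper, ← Finset.sum_add_distrib]
  exact Finset.sum_le_sum fun j _ => hsub j a b

theorem Wper_le_of_perMin {S : ℤ → (ℤ → ℝ) → ℝ}
    (hsub : ∀ j a b, S j (a ⊓ b) + S j (a ⊔ b) ≤ S j a + S j b)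
    (hshift : ∀ j k l x, S j x = S (j + k) (tau k l x))
    {p : ℕ} {q : ℤ} {y : ℤ → ℝ} (hy : PerMin S p q y) {M : ℕ} (hM : 0 < M) {x : ℤ → ℝ}
    (hx : tau ((M * p : ℕ) : ℤ) ((M : ℤ) * q) x = x) :
    Wper S (M * p) y ≤ Wper S (M * p) x := by
  set z : ℕ → ℤ → ℝ := fun m => tau (m * p) (m * q) x
  have hz_succ : ∀ m, tau p q (z m) = z (m + 1) := fun m => by
    simp only [z, tau_tau]
    push_cast
    ring_nf
  have hz_M : z M = z 0 := by
    simp only [z, tau_zero_zero, Nat.cast_zero, zero_mul]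
    exact_mod_cast hx
  set u := latticeSort M z
  have hu_per : ∀ s < M, tau p q (u s) = u s := fun s hs => by
    have := map_latticeSort (tauLatticeHom p q) M z s
    refine this.trans (latticeSort_pi_eq_of_map_range_eq ?_ hs)
    simpa [Function.comp_def, tauLatticeHom, hz_succ] using Multiset.map_range_succ_eq_of_eq hz_M
  have hu_ge : ∀ s ∈ Finset.range M, Wper S (M * p) y ≤ Wper S (M * p) (u s) := fun s hs => by
    rw [Wper_mul_of_tau_eq hshift hy.1, Wper_mul_of_tau_eq hshift (hu_per s (by simpa using hs))]
    exact mul_le_mul_of_nonneg_left (hy.2 _ (hu_per s (by simpa using hs))) M.cast_nonneg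
  have hz_eq : ∀ m ∈ Finset.range M, Wper S (M * p) (z m) = Wper S (M * p) x :=
    fun m _ => Wper_tau_of_tau_eq hshift hx _ _
  have key : (M : ℝ) * Wper S (M * p) y ≤ M * Wper S (M * p) x :=
    calc (M : ℝ) * Wper S (M * p) y
        = ∑ _s ∈ Finset.range M, Wper S (M * p) y := by simp
      _ ≤ ∑ s ∈ Finset.range M, Wper S (M * p) (u s) := Finset.sum_le_sum hu_ge
      _ ≤ ∑ m ∈ Finset.range M, Wper S (M * p) (z m) :=
        sum_latticeSort_le (Wper_inf_add_sup_le hsub _) M z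
      _ = M * Wper S (M * p) x := by simp [Finset.sum_congr rfl hz_eq]
  exact le_of_mul_le_mul_left key (by exact_mod_cast hM)

/-- `t` lies at distance at least `b` from `c + ℤ`. -/
def AwayModOne (b c t : ℝ) : Prop := b ≤ Int.fract (t - c) ∧ Int.fract (t - c) ≤ 1 - b

lemma abs_sub_round_lt_of_not_awayModOne {b c t : ℝ} (h : ¬AwayModOne b c t) :
    |t - c - round (t - c)| < b := by
  rw [abs_sub_round_eq_min, min_lt_iff]
  by_contra! hb
  exact h ⟨hb.1, by linarith [hb.2]⟩

/-- A bad grid point `i` yields an integer `i + m n` within distance `3` of `m t`, from which `i`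
is recovered modulo `m`. -/
lemma card_le_six_of_not_awayModOne {m : ℕ} {t : ℝ} {s : Finset ℕ} (hs : s ⊆ Finset.range m)
    (hbad : ∀ i ∈ s, ¬AwayModOne (3 / m) ((i : ℝ) / m) t) : s.card ≤ 6 := by
  rcases Nat.eq_zero_or_pos m with rfl | hm
  · rw [Finset.range_zero, Finset.subset_empty] at hs
    rw [hs, Finset.card_empty]; omega
  have hm' : (0 : ℝ) < m := by exact_mod_cast hm
  set f : ℕ → ℤ := fun i => i + m * round (t - i / m)
  have hf : ∀ i ∈ s, |m * t - f i| < 3 := fun i hi => by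
    have h := abs_sub_round_lt_of_not_awayModOne (hbad i hi)
    rw [lt_div_iff₀ hm', ← abs_of_pos hm', ← abs_mul, abs_of_pos hm'] at h
    have e : (m : ℝ) * t - f i = (t - i / m - round (t - i / m)) * m := by
      simp only [f]
      push_cast
      field_simp
      ring
    rwa [e]
  have hmod : ∀ i ∈ s, f i % m = i := fun i hi => by
    simp only [f]
    rw [Int.add_mul_emod_self_left,
      Int.emod_eq_of_lt (by positivity) (by exact_mod_cast Finset.mem_range.mp (hs hi))]
  calc s.card ≤ (Finset.Icc (⌊m * t⌋ - 2) (⌊m * t⌋ + 3)).card := by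
        refine Finset.card_le_card_of_injOn f (fun i hi => ?_) (fun i hi i' hi' hii' => ?_)
        · have := abs_lt.mp (hf i hi)
          have h1 := Int.floor_le (m * t)
          have h2 := Int.lt_floor_add_one (m * t)
          have hlo : ⌊m * t⌋ - 3 < f i := by
            exact_mod_cast (show ((⌊m * t⌋ - 3 : ℤ) : ℝ) < f i by push_cast; linarith)
          have hhi : f i < ⌊m * t⌋ + 4 := by
            exact_mod_cast (show (f i : ℝ) < ((⌊m * t⌋ + 4 : ℤ) : ℝ) by push_cast; linarith)
          rw [Finset.coe_Icc, Set.mem_Icc]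
          omega
        · exact_mod_cast (hmod i hi).symm.trans ((congrArg (· % (m : ℤ)) hii').trans (hmod i' hi'))
    _ = 6 := by rw [Int.card_Icc, show ⌊m * t⌋ + 3 + 1 - (⌊m * t⌋ - 2) = 6 by ring]; rfl

lemma exists_awayModOne (T : Finset ℝ) {m : ℕ} (hm : 6 * T.card < m) :
    ∃ c, ∀ t ∈ T, AwayModOne (3 / m) c t := by
  classical
  by_contra! h
  have hcover : Finset.range m ⊆
      T.biUnion fun t => {i ∈ Finset.range m | ¬AwayModOne (3 / m) ((i : ℝ) / m) t} := by
    intro i hi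
    obtain ⟨t, ht, hbad⟩ := h (i / m)
    exact Finset.mem_biUnion.mpr ⟨t, ht, Finset.mem_filter.mpr ⟨hi, hbad⟩⟩
  have := (Finset.card_le_card hcover).trans <| Finset.card_biUnion_le.trans <|
    Finset.sum_le_sum fun t _ => card_le_six_of_not_awayModOne (Finset.filter_subset _ _)
      fun i hi => (Finset.mem_filter.mp hi).2
  simp at this
  omega

lemma exists_awayModOne_of_tau_eq {p : ℕ} (hp : 0 < p) {q : ℤ} {y : ℤ → ℝ} (hy : tau p q y = y) :
    ∃ c, ∀ j, AwayModOne (3 / (8 * p)) c (y j) := by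
  set T := (Finset.Ico (0 : ℤ) p).image y
  have hT : 6 * T.card < 8 * p := by
    have : T.card ≤ p := Finset.card_image_le.trans (by simp)
    omega
  obtain ⟨c, hc⟩ := exists_awayModOne T hT
  refine ⟨c, fun j => ?_⟩
  have hper : Function.Periodic (fun j => Int.fract (y j - c)) p := fun j => by
    have : y (j + p) = y j + q := by
      conv_lhs => rw [← hy]
      simp [tau]
    simp only [this, add_sub_right_comm, Int.fract_add_intCast]
  have hj := hper.sub_int_mul_eq (j / p) (x := j)
  rw [Int.cast_id, mul_comm, ← Int.emod_def] at hj
  have hmem : y (j % p) ∈ T := Finset.mem_image_of_mem y <| Finset.mem_Ico.mpr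
    ⟨Int.emod_nonneg _ (by omega), Int.emod_lt_of_pos _ (by omega)⟩
  simpa [AwayModOne, ← hj] using hc _ hmem

section Bump

open Real

/-- For `0 ≤ a < b ≤ 1/2`, the argument of `smoothTransition` is `≥ 1` within distance `a` of
`c + ℤ` and `≤ 0` at distance `≥ b` from it. -/
noncomputable def periodicBump (a b c t : ℝ) : ℝ :=
  smoothTransition ((cos (2 * π * (t - c)) - cos (2 * π * b)) / (cos (2 * π * a) - cos (2 * π * b)))

variable {a b : ℝ} (c : ℝ)

open scoped ContDiff in
lemma contDiff_periodicBump : ContDiff ℝ ∞ (periodicBump a b c) :=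
  smoothTransition.contDiff.comp <|
    ((contDiff_cos.comp (by fun_prop)).sub contDiff_const).div_const _

lemma periodicBump_nonneg (t : ℝ) : 0 ≤ periodicBump a b c t := smoothTransition.nonneg _

lemma periodic_periodicBump : Function.Periodic (periodicBump a b c) 1 := fun t => by
  simp only [periodicBump, add_sub_right_comm, mul_add, mul_one, cos_add_two_pi]

lemma cos_two_pi_mul_lt (ha : 0 ≤ a) (hab : a < b) (hb : b ≤ 1 / 2) :
    cos (2 * π * b) < cos (2 * π * a) :=
  cos_lt_cos_of_nonneg_of_le_pi (by positivity) (by nlinarith [pi_pos])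
    (by nlinarith [pi_pos])

lemma periodicBump_eq_one (ha : 0 ≤ a) (hab : a < b) (hb : b ≤ 1 / 2) {t : ℝ}
    (ht : |t - c| ≤ a) : periodicBump a b c t = 1 := by
  have hcos : cos (2 * π * a) ≤ cos (2 * π * (t - c)) := by
    rw [← cos_abs (2 * π * (t - c)), abs_mul, abs_of_pos (by positivity : 0 < 2 * π)]
    exact cos_le_cos_of_nonneg_of_le_pi (by positivity) (by nlinarith [pi_pos])
      (by nlinarith [pi_pos])
  have hden := sub_pos.mpr (cos_two_pi_mul_lt ha hab hb)
  exact smoothTransition.one_of_one_le <| (one_le_div hden).mpr (by linarith)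

lemma periodicBump_eq_zero (ha : 0 ≤ a) (hab : a < b) (hb : b ≤ 1 / 2) {t : ℝ}
    (ht : AwayModOne b c t) : periodicBump a b c t = 0 := by
  obtain ⟨hbs, hsb⟩ := ht
  set s := Int.fract (t - c)
  have hs : cos (2 * π * (t - c)) = cos (2 * π * s) := by
    rw [← Int.fract_add_floor (t - c), mul_add, mul_comm (2 * π) (⌊t - c⌋ : ℝ),
      cos_add_int_mul_two_pi]
  -- `cos (2πs)` is at most `cos (2πb)` on `[b, 1 - b]`, by symmetry about `1/2`
  have hcos : cos (2 * π * s) ≤ cos (2 * π * b) := by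
    rcases le_total s (1 / 2) with h | h
    · exact cos_le_cos_of_nonneg_of_le_pi (by nlinarith [pi_pos]) (by nlinarith [pi_pos])
        (by nlinarith [pi_pos])
    · rw [← cos_two_pi_sub, ← mul_one_sub]
      exact cos_le_cos_of_nonneg_of_le_pi (by nlinarith [pi_pos]) (by nlinarith [pi_pos])
        (by nlinarith [pi_pos])
  have hden := sub_pos.mpr (cos_two_pi_mul_lt ha hab hb)
  exact smoothTransition.zero_of_nonpos <| div_nonpos_of_nonpos_of_nonneg (by linarith) hden.le

end Bump

lemma Function.Periodic.iteratedDeriv {f : ℝ → ℝ} {c : ℝ} (hf : Function.Periodic f c) (n : ℕ) :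
    Function.Periodic (iteratedDeriv n f) c := fun t => by
  have := congrFun (iteratedDeriv_comp_add_const n f c) t
  rw [show (fun z => f (z + c)) = f from funext hf] at this
  exact this.symm

open scoped ContDiff in
lemma exists_bound_iteratedDeriv_of_periodic {f : ℝ → ℝ} (hf : ContDiff ℝ ∞ f) {c : ℝ}
    (hper : Function.Periodic f c) (hc : c ≠ 0) (k : ℕ) :
    ∃ B, 0 < B ∧ ∀ n ≤ k, ∀ t, |iteratedDeriv n f t| ≤ B := by
  have hbdd : ∀ n, ∃ B, ∀ t, |iteratedDeriv n f t| ≤ B := fun n => by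
    obtain ⟨B, hB⟩ := isBounded_iff_forall_norm_le.mp <|
      (hper.iteratedDeriv n).isBounded_of_continuous hc
        (hf.continuous_iteratedDeriv n (by exact_mod_cast le_top))
    exact ⟨B, fun t => hB _ ⟨t, rfl⟩⟩
  choose B hB using hbdd
  refine ⟨1 + ∑ n ∈ Finset.range (k + 1), |B n|, by positivity, fun n hn t => ?_⟩
  calc |iteratedDeriv n f t| ≤ |B n| := (hB n t).trans (le_abs_self _)
    _ ≤ ∑ n ∈ Finset.range (k + 1), |B n| :=
      Finset.single_le_sum (f := fun n => |B n|) (fun _ _ => abs_nonneg _)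
        (Finset.mem_range.mpr (by omega))
    _ ≤ _ := le_add_of_nonneg_left zero_le_one

lemma pd_onsite_self (φ : ℝ → ℝ) (j : ℤ) :
    pd (fun x => φ (x j)) j = fun x => deriv φ (x j) := by
  ext x
  simp [pd]

lemma pd_onsite_of_ne (φ : ℝ → ℝ) {i j : ℤ} (hij : i ≠ j) : pd (fun x => φ (x j)) i = 0 := by
  ext x
  simp [pd, update_of_ne hij.symm]

lemma pdList_onsite (φ : ℝ → ℝ) (j : ℤ) (L : List ℤ) :
    pdList (fun x => φ (x j)) L = (fun x => iteratedDeriv L.length φ (x j)) ∨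
      pdList (fun x => φ (x j)) L = 0 := by
  induction L with
  | nil => simp [pdList]
  | cons i L ih =>
    rcases ih with h | h
    · rcases eq_or_ne i j with rfl | hij
      · left
        rw [pdList, h, pd_onsite_self, List.length_cons, iteratedDeriv_succ]
      · right
        rw [pdList, h, pd_onsite_of_ne _ hij]
    · right
      rw [pdList, h]
      ext x
      simp [pd]

lemma ckClose_add_onsite (F : (ℤ → ℝ) → ℝ) {φ : ℝ → ℝ} (j : ℤ) {k : ℕ} {η : ℝ} (hη : 0 ≤ η)
    (hφ : ∀ n ≤ k, ∀ t, |iteratedDeriv n φ t| ≤ η) :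
    CkClose k η (fun x => F x + φ (x j)) F := fun L hL x => by
  simp only [add_sub_cancel_left]
  rcases pdList_onsite φ j L with h | h <;> rw [h]
  · exact hφ _ hL _
  · simpa using hη

lemma pd_add_onsite_self {F : (ℤ → ℝ) → ℝ} {φ : ℝ → ℝ} {j : ℤ} {x : ℤ → ℝ}
    (hF : DifferentiableAt ℝ (fun t => F (update x j t)) (x j)) (hφ : DifferentiableAt ℝ φ (x j)) :
    pd (fun x => F x + φ (x j)) j x = pd F j x + deriv φ (x j) := by
  simp only [pd, update_self]
  exact deriv_fun_add hF hφ

lemma pd_add_onsite_of_ne (F : (ℤ → ℝ) → ℝ) (φ : ℝ → ℝ) {i j : ℤ} (hij : i ≠ j) :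
    pd (fun x => F x + φ (x j)) i = pd F i := by
  ext x
  simp [pd, update_of_ne hij.symm]

section Perturbation

variable {F : (ℤ → ℝ) → ℝ} {φ : ℝ → ℝ} {j : ℤ}

lemma differentiable_onsite_update (hφ : Differentiable ℝ φ) (x : ℤ → ℝ) (i : ℤ) :
    Differentiable ℝ fun t => φ (update x i t j) := by
  rcases eq_or_ne j i with rfl | hji
  · simpa using hφ
  · simp [update_of_ne hji]

lemma pd_add_onsite (hF : ∀ x, DifferentiableAt ℝ (fun t => F (update x j t)) (x j))
    (hφ : Differentiable ℝ φ) (i : ℤ) :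
    pd (fun x => F x + φ (x j)) i = fun x => pd F i x + if i = j then deriv φ (x j) else 0 := by
  ext x
  rcases eq_or_ne i j with rfl | hij
  · simp [pd_add_onsite_self (hF x) (hφ _)]
  · simp [pd_add_onsite_of_ne F φ hij, hij]

lemma pd_pd_add_onsite (hF : ∀ x, DifferentiableAt ℝ (fun t => F (update x j t)) (x j))
    (hF' : ∀ x, DifferentiableAt ℝ (fun t => pd F j (update x j t)) (x j))
    (hφ : Differentiable ℝ φ) (hφ' : Differentiable ℝ (deriv φ)) (i k : ℤ) :
    pd (pd (fun x => F x + φ (x j)) i) k =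
      fun x => pd (pd F i) k x + if i = j ∧ k = j then deriv (deriv φ) (x j) else 0 := by
  rw [pd_add_onsite hF hφ]
  rcases eq_or_ne i j with rfl | hij
  · simp only [if_true, true_and]
    exact pd_add_onsite hF' hφ' k
  · simp [hij]

end Perturbation

theorem SatisfiesAE.add_onsite {r : ℕ} {C : ℝ} {S : ℤ → (ℤ → ℝ) → ℝ} (hS : SatisfiesAE r C S)
    {g : ℝ → ℝ} (hg : ContDiff ℝ 2 g) (hg0 : ∀ t, 0 ≤ g t) (hper : Function.Periodic g 1)
    {η : ℝ} (hg1 : ∀ t, |deriv g t| ≤ η) (hg2 : ∀ t, |deriv (deriv g) t| ≤ η) :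
    SatisfiesAE r (C + η) (fun j x => S j x + g (x j)) := by
  have hdg : Differentiable ℝ g := hg.differentiable (by norm_num)
  have hdg' : Differentiable ℝ (deriv g) :=
    (hg.iterate_deriv' 1 1).differentiable (by norm_num)
  have hpd := fun j => pd_add_onsite (F := S j) (hS.diff1 j j) hdg
  have hpd2 := fun j => pd_pd_add_onsite (F := S j) (hS.diff1 j j) (hS.diff2 j j j) hdg hdg'
  refine
    { r_pos := hS.r_pos
      C_pos := by linarith [hS.C_pos, (abs_nonneg _).trans (hg1 0)]
      finRange := fun j x y h => by rw [hS.finRange j x y h, h j (by simp)]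
      contS := fun j => (hS.contS j).add (hg.continuous.comp (continuous_apply j))
      diff1 := fun j i x => (hS.diff1 j i x).add (differentiable_onsite_update hdg x i _)
      diff2 := fun j i k x => ?_
      cont1 := fun j i => ?_
      cont2 := fun j i k => ?_
      shiftInv := fun j k l x => by
        rw [hS.shiftInv j k l x, show tau k l x (j + k) = x j + l by simp [tau]]
        simpa using congrArg (S (j + k) (tau k l x) + ·) (hper.int_mul l (x j)).symm
      coercive := fun j k hk M => by
        obtain ⟨R, hR⟩ := hS.coercive j k hk M
        exact ⟨R, fun x hx => le_add_of_le_of_nonneg (hR x hx) (hg0 _)⟩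
      mono := fun j i k hik x => by
        rw [hpd2]
        have : ¬(i = j ∧ k = j) := fun h => hik (h.1.trans h.2.symm)
        simpa [this] using hS.mono j i k hik x
      monoStrict := fun j k hjk x => by
        rw [hpd2]
        have : k ≠ j := by rintro rfl; simp at hjk
        simpa [this] using hS.monoStrict j k hjk x
      bdd1 := fun j i x => by
        rw [hpd]
        refine (abs_add_le _ _).trans (add_le_add (hS.bdd1 j i x) ?_)
        split_ifs
        exacts [hg1 _, by simpa using (abs_nonneg _).trans (hg1 0)]
      bdd2 := fun j i k x => by
        rw [hpd2]
        refine (abs_add_le _ _).trans (add_le_add (hS.bdd2 j i k x) ?_)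
        split_ifs
        exacts [hg2 _, by simpa using (abs_nonneg _).trans (hg1 0)] }
  · rw [hpd]
    split_ifs
    · exact (hS.diff2 j i k x).add (differentiable_onsite_update hdg' x k _)
    · simpa using hS.diff2 j i k x
  · rw [hpd]
    split_ifs
    · exact (hS.cont1 j i).add (hdg'.continuous.comp (continuous_apply j))
    · simpa using hS.cont1 j i
  · rw [hpd2]
    split_ifs
    · exact (hS.cont2 j i k).add ((hg.iterate_deriv' 0 2).continuous.comp (continuous_apply j))
    · simpa using hS.cont2 j i k

lemma apply_add_of_tau_eq {k l : ℤ} {x : ℤ → ℝ} (hx : tau k l x = x) (j : ℤ) :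
    x (j + k) = x j + l := by
  conv_lhs => rw [← hx]
  simp [tau]

lemma Wper_add_onsite (S : ℤ → (ℤ → ℝ) → ℝ) (g : ℝ → ℝ) (n : ℕ) (x : ℤ → ℝ) :
    Wper (fun j x => S j x + g (x j)) n x = Wper S n x + ∑ j ∈ Finset.Icc 1 (n : ℤ), g (x j) :=
  Finset.sum_add_distrib

lemma card_mul_le_sum_onsite {g : ℝ → ℝ} (hg0 : ∀ t, 0 ≤ g t) (hper : Function.Periodic g 1)
    {n : ℕ} {l : ℤ} {x : ℤ → ℝ} (hx : tau n l x = x) {N : ℕ} {ks ls : Fin N → ℤ}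
    (hks : StrictMono ks) (hrange : ∀ i, 0 ≤ ks i ∧ ks i < n) {δ : ℝ}
    (hδ : ∀ i, δ ≤ g (x (ks i) + ls i)) :
    N * δ ≤ ∑ j ∈ Finset.Icc 1 (n : ℤ), g (x j) := by
  have hgint : ∀ (t : ℝ) (m : ℤ), g (t + m) = g t := fun t m => by
    simpa using hper.int_mul m t
  have hgx : Function.Periodic (fun j => g (x j)) n := fun j => by
    simp only [apply_add_of_tau_eq hx, hgint]
  set e : Fin N → ℕ := fun i => (ks i).toNat
  have he : ∀ i, ((e i : ℕ) : ℤ) = ks i := fun i => Int.toNat_of_nonneg (hrange i).1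
  have he_inj : Set.InjOn e (Finset.univ : Finset (Fin N)) := fun i _ i' _ h =>
    hks.injective (by rw [← he, ← he i', h])
  calc (N : ℝ) * δ ≤ ∑ i, g (x (ks i)) := by
        simpa [hgint] using Finset.sum_le_sum fun i (_ : i ∈ Finset.univ) => hδ i
    _ = ∑ i ∈ Finset.univ.image e, g (x i) := by
        rw [Finset.sum_image he_inj]
        simp only [he]
    _ ≤ ∑ i ∈ Finset.range n, g (x i) := by
        refine Finset.sum_le_sum_of_subset_of_nonneg (fun i hi => ?_) fun _ _ _ => hg0 _
        obtain ⟨i, -, rfl⟩ := Finset.mem_image.mp hi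
        have := he i
        have := hrange i
        exact Finset.mem_range.mpr (by omega)
    _ = ∑ j ∈ Finset.Icc 1 (n : ℤ), g (x j) := by
        rw [sum_Icc_one_eq_sum_range, hgx.sum_range_add]

open scoped ContDiff in
lemma exists_onsite_bump {p : ℕ} (hp : 1 ≤ p) (c : ℝ) (k : ℕ) {ε : ℝ} (hε : 0 < ε) :
    ∃ B > 0, ∃ g : ℝ → ℝ, ContDiff ℝ ∞ g ∧ (∀ t, 0 ≤ g t) ∧ Function.Periodic g 1 ∧
      (∀ n ≤ k, ∀ t, |iteratedDeriv n g t| ≤ ε / 3) ∧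
      (∀ t, AwayModOne (3 / (8 * p)) c t → g t = 0) ∧
      (∀ t, |t - c| ≤ 1 / (4 * p) → g t = ε / (3 * B)) := by
  have hp' : (1 : ℝ) ≤ p := by exact_mod_cast hp
  have ha : 0 ≤ 1 / (4 * (p : ℝ)) := by positivity
  have hab : 1 / (4 * (p : ℝ)) < 3 / (8 * p) := by
    rw [div_lt_div_iff₀ (by positivity) (by positivity)]; linarith
  have hb : 3 / (8 * (p : ℝ)) ≤ 1 / 2 := by
    rw [div_le_div_iff₀ (by positivity) (by positivity)]; linarith
  set bump := periodicBump (1 / (4 * p)) (3 / (8 * p)) c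
  obtain ⟨B, hB0, hB⟩ := exists_bound_iteratedDeriv_of_periodic (contDiff_periodicBump c)
    (periodic_periodicBump (a := 1 / (4 * p)) (b := 3 / (8 * p)) c) one_ne_zero k
  have hδ : 0 < ε / (3 * B) := by positivity
  refine ⟨B, hB0, fun t => ε / (3 * B) * bump t, contDiff_const.mul (contDiff_periodicBump c),
    fun t => mul_nonneg hδ.le (periodicBump_nonneg c t),
    fun t => congrArg (_ * ·) (periodic_periodicBump c t), fun n hn t => ?_,
    fun t ht => (congrArg (_ * ·) (periodicBump_eq_zero c ha hab hb ht)).trans (mul_zero _),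
    fun t ht => (congrArg (_ * ·) (periodicBump_eq_one c ha hab hb ht)).trans (mul_one _)⟩
  rw [iteratedDeriv_const_mul_field, abs_mul, abs_of_pos hδ]
  calc ε / (3 * B) * |iteratedDeriv n bump t| ≤ ε / (3 * B) * B := by gcongr; exact hB n hn t
    _ = ε / 3 := by field_simp

theorem first_perturbation_general
    (r : ℕ) (C : ℝ) (S : ℤ → (ℤ → ℝ) → ℝ) (hS : SatisfiesAE r C S)
    (p : ℕ) (hp : 1 ≤ p) (q : ℤ)
    (ymin : ℤ → ℝ) (hymin : PerMin S p q ymin)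
    (ε : ℝ) (hε : 0 < ε) (k : ℕ) (hk : 2 ≤ k) :
    ∃ Ck : ℝ, 0 < Ck ∧
    ∃ Sε1 : ℤ → (ℤ → ℝ) → ℝ,
      (∃ C' : ℝ, SatisfiesAE r C' Sε1) ∧
      (∀ j : ℤ, CkClose k (ε / 3) (Sε1 j) (S j)) ∧
      ∃ ξ : ℝ, ∀ M : ℕ, 1 ≤ M → ∀ x : ℤ → ℝ, tau ((M * p : ℕ) : ℤ) ((M : ℤ) * q) x = x →
        ∀ N : ℕ, ∀ ks ls : Fin N → ℤ, StrictMono ks →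
          (∀ i : Fin N, 0 ≤ ks i ∧ ks i < ((M * p : ℕ) : ℤ)) →
          (∀ i : Fin N, ξ ≤ x (ks i) + (ls i : ℝ) ∧
            x (ks i) + (ls i : ℝ) ≤ ξ + 1 / (2 * (p : ℝ))) →
          Wper Sε1 (M * p) ymin + (N : ℝ) * ε / (3 * Ck * (p : ℝ) ^ k) ≤ Wper Sε1 (M * p) x := by
  obtain ⟨c, hc⟩ := exists_awayModOne_of_tau_eq hp hymin.1
  obtain ⟨B, hB, g, hg, hg0, hper, hgk, hg_away, hg_near⟩ := exists_onsite_bump hp c k hε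
  have hAE := hS.add_onsite (hg.of_le (WithTop.coe_le_coe.2 le_top)) hg0 hper
    (by simpa using hgk 1 (by omega)) (by simpa [iteratedDeriv_succ] using hgk 2 hk)
  refine ⟨B / p ^ k, by positivity, _, ⟨_, hAE⟩,
    fun j => ckClose_add_onsite _ j (by positivity) hgk, c - 1 / (4 * p),
    fun M hM x hx N ks ls hks hrange hwin => ?_⟩
  have hvisits := card_mul_le_sum_onsite hg0 hper hx hks hrange (ls := ls) fun i => by
    have h2p : 1 / (2 * (p : ℝ)) = 2 * (1 / (4 * p)) := by field_simp; ring
    rw [hg_near _ (abs_le.mpr ⟨by linarith [hwin i], by linarith [hwin i]⟩)]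
  have hmin := Wper_le_of_perMin hS.inf_add_sup_le hS.shiftInv hymin hM hx
  have hgap : (N : ℝ) * ε / (3 * (B / p ^ k) * p ^ k) = N * (ε / (3 * B)) := by
    have : (0 : ℝ) < p := by exact_mod_cast hp
    field_simp
  rw [Wper_add_onsite, Wper_add_onsite, Finset.sum_eq_zero fun j _ => hg_away _ (hc j), hgap]
  linarith

/-- First perturbation: for `ω` irrational with `q/p < ω < (q+1)/p` and a
`(p,q)`-periodic Birkhoff minimizer `y^min`, there are potentials `S^{ε,1}` satisfying A-E,
`C^k`-`ε/3`-close to the `S_j`, and a `ξ ∈ ℝ`, such that any `(Mp,Mq)`-periodic configuration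
visiting `[ξ, ξ + 1/(2p)]` (mod 1) at `N` sites pays action excess at least
`Nε/(3 C_k p^k)`. -/
theorem first_perturbation
    (r : ℕ) (C : ℝ) (S : ℤ → (ℤ → ℝ) → ℝ) (hS : SatisfiesAE r C S)
    (ω : ℝ) (hω : Irrational ω) (p : ℕ) (hp : 1 ≤ p) (q : ℤ)
    (h1 : (q : ℝ) / (p : ℝ) < ω) (h2 : ω < ((q : ℝ) + 1) / (p : ℝ))
    (ymin : ℤ → ℝ) (hymin : PerMin S p q ymin) (hyB : Birkhoff ymin)
    (ε : ℝ) (hε : 0 < ε) (k : ℕ) (hk : 2 ≤ k) :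
    ∃ Ck : ℝ, 0 < Ck ∧
    ∃ Sε1 : ℤ → (ℤ → ℝ) → ℝ,
      (∃ C' : ℝ, SatisfiesAE r C' Sε1) ∧
      (∀ j : ℤ, CkClose k (ε / 3) (Sε1 j) (S j)) ∧
      ∃ ξ : ℝ, ∀ M : ℕ, 1 ≤ M → ∀ x : ℤ → ℝ, tau ((M * p : ℕ) : ℤ) ((M : ℤ) * q) x = x →
        ∀ N : ℕ, ∀ ks ls : Fin N → ℤ, StrictMono ks →
          (∀ i : Fin N, 0 ≤ ks i ∧ ks i < ((M * p : ℕ) : ℤ)) →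
          (∀ i : Fin N, ξ ≤ x (ks i) + (ls i : ℝ) ∧
            x (ks i) + (ls i : ℝ) ≤ ξ + 1 / (2 * (p : ℝ))) →
          Wper Sε1 (M * p) ymin + (N : ℝ) * ε / (3 * Ck * (p : ℝ) ^ k) ≤ Wper Sε1 (M * p) x :=
  first_perturbation_general r C S hS p hp q ymin hymin ε hε k hk
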